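/- (Key induction lemma, d ≥ 4.) Fix d ≥ 4, c₅ = 3.8/3, a constant c₈ > 1, a₀ ≥ (2c₈)^{10}, and the sequence aₙ = a₀^{c₅ⁿ} (so aₙ = a_{n-1}^{c₅}). Suppose (pₙ(u))_{n≥0} is a sequence in [0,1] satisfying the recursion pₙ(u) ≤ c₈·a_{n-1}^{2c₅−2}·(p_{n-1}(u)² + u·a_{n-1}^{2−c₅(d-1)}) for all n ≥ 1. Then for any u ≤ 1 and any n ≥ 0: if pₙ(u) ≤ aₙ^{(2−c₅(d-1))/2}, then also p_{n+1}(u) ≤ a_{n+1}^{(2−c₅(d-1))/2}. -/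

import Mathlib

/-!
Write `A = aₙ` and `e = 2 − c₅(d − 1)`, so that `a_{n+1} = A^{c₅}`. The hypothesis gives
`pₙ² ≤ A^e`, so the recursion yields `p_{n+1} ≤ 2c₈ A^{2c₅−2+e}`. For `d ≥ 4` the target exponent
`c₅ e / 2` exceeds `2c₅ − 2 + e` by at least `1/10`, and `2c₈ ≤ a₀^{1/10} ≤ A^{1/10}` absorbs the
constant.
-/

open Real

lemma sq_le_rpow_of_le_rpow_half {A x e : ℝ} (hA : 0 ≤ A) (hx0 : 0 ≤ x) (hx : x ≤ A ^ (e / 2)) :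
    x ^ 2 ≤ A ^ e := by
  calc x ^ 2 ≤ (A ^ (e / 2)) ^ 2 := pow_le_pow_left₀ hx0 hx 2
    _ = A ^ e := by rw [← rpow_natCast, ← rpow_mul hA]; norm_num

lemma mul_sq_add_mul_rpow_le {A c x u b e : ℝ} (hA : 0 < A) (hc : 0 ≤ c) (hx0 : 0 ≤ x)
    (hx : x ≤ A ^ (e / 2)) (hu : u ≤ 1) :
    c * A ^ b * (x ^ 2 + u * A ^ e) ≤ 2 * c * A ^ (b + e) := by
  have hAe : 0 < A ^ e := rpow_pos_of_pos hA e
  have hsum : x ^ 2 + u * A ^ e ≤ 2 * A ^ e := by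
    nlinarith [sq_le_rpow_of_le_rpow_half hA.le hx0 hx]
  calc c * A ^ b * (x ^ 2 + u * A ^ e) ≤ c * A ^ b * (2 * A ^ e) := by gcongr
    _ = 2 * c * A ^ (b + e) := by rw [rpow_add hA]; ring

lemma le_rpow_of_pow_le {K A δ : ℝ} {m : ℕ} (hK : 0 ≤ K) (hm : m ≠ 0) (hKA : K ^ m ≤ A)
    (hA : 1 ≤ A) (hδ : (m : ℝ)⁻¹ ≤ δ) : K ≤ A ^ δ :=
  calc K = (K ^ m) ^ (m⁻¹ : ℝ) := (pow_rpow_inv_natCast hK hm).symm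
    _ ≤ A ^ (m⁻¹ : ℝ) := by gcongr
    _ ≤ A ^ δ := rpow_le_rpow_of_exponent_le hA hδ

lemma mul_rpow_le_rpow {K A s t : ℝ} (hA : 0 < A) (hK : K ≤ A ^ (t - s)) : K * A ^ s ≤ A ^ t :=
  calc K * A ^ s ≤ A ^ (t - s) * A ^ s := by gcongr
    _ = A ^ t := by rw [← rpow_add hA, sub_add_cancel]

lemma exponent_gap {c₅ d : ℝ} (hc₅ : c₅ = 3.8 / 3) (hd : 4 ≤ d) :
    1 / 10 ≤ c₅ * ((2 - c₅ * (d - 1)) / 2) - (2 * c₅ - 2 + (2 - c₅ * (d - 1))) := by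
  subst hc₅; linarith

theorem key_induction_lemma (d : ℕ) (hd : 4 ≤ d) (c₅ c₈ a₀ u : ℝ)
    (hc₅ : c₅ = 3.8 / 3) (hc₈ : 1 < c₈) (ha₀ : (2 * c₈) ^ 10 ≤ a₀)
    (a : ℕ → ℝ) (ha : ∀ n, a n = a₀ ^ (c₅ ^ n))
    (p : ℕ → ℝ) (hp01 : ∀ n, p n ∈ Set.Icc (0 : ℝ) 1)
    (hrec : ∀ n : ℕ, 1 ≤ n →
      p n ≤ c₈ * a (n - 1) ^ (2 * c₅ - 2) *
        (p (n - 1) ^ 2 + u * a (n - 1) ^ (2 - c₅ * ((d : ℝ) - 1))))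
    (hu : u ≤ 1) (n : ℕ)
    (hn : p n ≤ a n ^ ((2 - c₅ * ((d : ℝ) - 1)) / 2)) :
    p (n + 1) ≤ a (n + 1) ^ ((2 - c₅ * ((d : ℝ) - 1)) / 2) := by
  set e := 2 - c₅ * ((d : ℝ) - 1)
  have hc₅1 : 1 ≤ c₅ := by rw [hc₅]; norm_num
  have ha₀1 : 1 ≤ a₀ := (one_le_pow₀ (by linarith)).trans ha₀
  have ha₀_le : a₀ ≤ a n := by rw [ha n]; exact self_le_rpow_of_one_le ha₀1 (one_le_pow₀ hc₅1)
  have hA : 0 < a n := by linarith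
  have ha_succ : a (n + 1) = a n ^ c₅ := by rw [ha, ha, pow_succ, rpow_mul (by linarith)]
  have hstep : p (n + 1) ≤ 2 * c₈ * a n ^ (2 * c₅ - 2 + e) := by
    refine le_trans ?_ (mul_sq_add_mul_rpow_le hA (by linarith) (hp01 n).1 hn hu)
    simpa using hrec (n + 1) (by omega)
  have hconst : 2 * c₈ ≤ a n ^ (c₅ * (e / 2) - (2 * c₅ - 2 + e)) := by
    refine le_rpow_of_pow_le (by linarith) (by norm_num) (ha₀.trans ha₀_le) (by linarith) ?_
    convert exponent_gap (d := d) hc₅ (mod_cast hd) using 1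
    norm_num
  rw [ha_succ, ← rpow_mul hA.le]
  exact hstep.trans (mul_rpow_le_rpow hA hconst)
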